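/- Let S be a fully-transpositional semigroup on A (|A| ≥ 3) containing a semi-constant function but no constant function, let f ∈ S and b ∈ A, and suppose f(b) is not a fixed point of f. Then for every a ∈ [b]_f there exists a semi-constant g ∈ S with [a]_g = {a} and cnst(g) ∉ [b]_f, such that [b]_{f∘g∘f} ⊄ [b]_{f²}. -/

import Mathlib

/-- `f` is semi-constant with constant value `c`. -/
def SemiConstWith {A : Type*} (f : A → A) (c : A) : Prop :=
  ∃ B : Set A, B.Nontrivial ∧ (∀ x ∈ B, f x = c) ∧ ∀ x ∉ B, f x = x

/-!
Conjugating the given semi-constant function by a permutation moves its constant domain and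
constant value around; conjugation by a product of transpositions stays in `S`, and three
transpositions suffice to send two points of the constant domain and one point outside it
(which exists because `S` has no constant function) to any three distinct points. If some `x`
has `f (f x) ≠ f (f b)` and `f x ≠ a`, collapse `f b` and `f x` onto the value `f b` while
fixing `a`. Otherwise every `x` with `f (f x) ≠ f (f b)` has `f (f x) = f a = f b`, and
collapsing `f (f b)` onto `f b` makes the composite with `f ∘ f` constant, which is impossible.
-/

open Equiv Function

namespace SemiConstWith

variable {A : Type*} {f : A → A} {c : A}

theorem iff_forall_and_exists :
    SemiConstWith f c ↔ (∀ x, f x = x ∨ f x = c) ∧ ∃ x ≠ c, f x = c := by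
  constructor
  · rintro ⟨B, hB, hconst, hid⟩
    refine ⟨fun x => ?_, ?_⟩
    · by_cases hx : x ∈ B
      · exact Or.inr (hconst x hx)
      · exact Or.inl (hid x hx)
    · obtain ⟨x, hx, hxc⟩ := hB.exists_ne c
      exact ⟨x, hxc, hconst x hx⟩
  · rintro ⟨hf, x, hxc, hx⟩
    have hc : f c = c := (hf c).elim id id
    exact ⟨{y | f y = c}, ⟨x, hx, c, hc, hxc⟩, fun _ hy => hy,
      fun y hy => (hf y).resolve_right hy⟩

theorem apply_self (hf : SemiConstWith f c) : f c = c :=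
  ((iff_forall_and_exists.mp hf).1 c).elim id id

theorem unique {c' : A} (hf : SemiConstWith f c) (hf' : SemiConstWith f c') : c = c' := by
  obtain ⟨-, x, hxc, hx⟩ := iff_forall_and_exists.mp hf
  have hxx : f x ≠ x := fun h => hxc (hx ▸ h).symm
  exact hx.symm.trans (((iff_forall_and_exists.mp hf').1 x).resolve_left hxx)

theorem eq_of_apply_eq {r x : A} (hf : SemiConstWith f c) (hr : r ≠ c) (hx : f x = r) :
    x = r :=
  (((iff_forall_and_exists.mp hf).1 x).resolve_right (hx ▸ hr)).symm.trans hx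

theorem conj (hf : SemiConstWith f c) (π : Perm A) :
    SemiConstWith (⇑π ∘ f ∘ ⇑π.symm) (π c) := by
  obtain ⟨hfx, x, hxc, hx⟩ := iff_forall_and_exists.mp hf
  refine iff_forall_and_exists.mpr ⟨fun y => ?_, π x, π.injective.ne hxc, ?_⟩
  · rcases hfx (π.symm y) with h | h <;> simp [h]
  · simp [hx]

end SemiConstWith

section Transport

variable {A : Type*} [DecidableEq A] (M : Submonoid (Perm A))

theorem Submonoid.exists_mem_extend_perm (hM : ∀ x y : A, x ≠ y → swap x y ∈ M)
    {π : Perm A} (hπ : π ∈ M) {s : Set A} {w r : A} (hw : w ∉ s) (hr : r ∉ π '' s) :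
    ∃ σ ∈ M, (∀ x ∈ s, σ x = π x) ∧ σ w = r := by
  have hswap : swap (π w) r ∈ M := by
    by_cases h : π w = r
    · rw [h, swap_self]; exact M.one_mem
    · exact hM _ _ h
  refine ⟨swap (π w) r * π, M.mul_mem hswap hπ, fun x hx => ?_, by simp⟩
  have hxw : π x ≠ π w := π.injective.ne (fun h => hw (h ▸ hx))
  have hxr : π x ≠ r := fun h => hr ⟨x, hx, h⟩
  exact swap_apply_of_ne_of_ne hxw hxr

theorem Submonoid.exists_mem_perm_apply_eq₃ (hM : ∀ x y : A, x ≠ y → swap x y ∈ M)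
    {c d w p q r : A} (hcd : c ≠ d) (hcw : c ≠ w) (hdw : d ≠ w)
    (hpq : p ≠ q) (hpr : p ≠ r) (hqr : q ≠ r) :
    ∃ π ∈ M, π c = p ∧ π d = q ∧ π w = r := by
  obtain ⟨π₁, hπ₁, -, hc₁⟩ :=
    M.exists_mem_extend_perm hM M.one_mem (Set.notMem_empty c) (r := p) (by simp)
  obtain ⟨π₂, hπ₂, hπ₂₁, hd₂⟩ :=
    M.exists_mem_extend_perm hM hπ₁ (s := {c}) (Ne.symm hcd) (r := q) (by simp [hc₁, hpq.symm])
  have hc₂ : π₂ c = p := by simp [hπ₂₁, hc₁]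
  obtain ⟨π₃, hπ₃, hπ₃₂, hw₃⟩ :=
    M.exists_mem_extend_perm hM hπ₂ (s := {c, d}) (w := w)
    (by simp [hcw.symm, hdw.symm]) (r := r)
    (by simp only [Set.image_pair, hc₂, hd₂]; simp [hpr.symm, hqr.symm])
  exact ⟨π₃, hπ₃, by simp [hπ₃₂, hc₂], by simp [hπ₃₂, hd₂], hw₃⟩

end Transport

section FunctionSemigroup

variable {A : Type*} (S : Set (A → A))

def conjStableSubmonoid : Submonoid (Perm A) where
  carrier := {π | ∀ h ∈ S, ⇑π ∘ h ∘ ⇑π.symm ∈ S}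
  mul_mem' hπ hσ h hh := hπ _ (hσ h hh)
  one_mem' _ hh := hh

variable {S} [DecidableEq A] (hcomp : ∀ f ∈ S, ∀ g ∈ S, f ∘ g ∈ S)
  (hFT : ∀ a b : A, a ≠ b → ⇑(swap a b) ∈ S)
include hcomp hFT

theorem swap_mem_conjStableSubmonoid {x y : A} (hxy : x ≠ y) :
    swap x y ∈ conjStableSubmonoid S := fun h hh => by
  rw [symm_swap]
  exact hcomp _ (hFT x y hxy) _ (hcomp _ hh _ (hFT x y hxy))

theorem exists_semiConstWith_mem (hsc : ∃ h ∈ S, ∃ c, SemiConstWith h c)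
    (hnoconst : ∀ h ∈ S, ¬ ∃ c, ∀ x, h x = c) {p q r : A}
    (hpq : p ≠ q) (hpr : p ≠ r) (hqr : q ≠ r) :
    ∃ g ∈ S, SemiConstWith g p ∧ g q = p ∧ g r = r := by
  obtain ⟨h, hhS, c, hc⟩ := hsc
  obtain ⟨hhx, d, hdc, hd⟩ := SemiConstWith.iff_forall_and_exists.mp hc
  obtain ⟨w, hw⟩ : ∃ w, h w ≠ c := by
    by_contra! hall
    exact hnoconst h hhS ⟨c, hall⟩
  have hww : h w = w := (hhx w).resolve_right hw
  obtain ⟨π, hπ, rfl, rfl, rfl⟩ := (conjStableSubmonoid S).exists_mem_perm_apply_eq₃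
    (fun x y => swap_mem_conjStableSubmonoid hcomp hFT) hdc.symm
    (fun h => hw (h ▸ hc.apply_self)) (fun h => hw (h ▸ hd)) hpq hpr hqr
  exact ⟨_, hπ h hhS, hc.conj π, by simp [hd], by simp [hww]⟩

end FunctionSemigroup

theorem exists_ne_ne_of_three {A : Type*} (h : ∃ x y z : A, x ≠ y ∧ x ≠ z ∧ y ≠ z)
    (p q : A) :
    ∃ z, z ≠ p ∧ z ≠ q := by
  obtain ⟨x, y, z, hxy, hxz, hyz⟩ := h
  by_cases hxp : x = p
  · subst hxp
    by_cases hyq : y = q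
    · subst hyq; exact ⟨z, hxz.symm, hyz.symm⟩
    · exact ⟨y, hxy.symm, hyq⟩
  · by_cases hxq : x = q
    · subst hxq
      by_cases hyp : y = p
      · subst hyp; exact ⟨z, hyz.symm, hxz.symm⟩
      · exact ⟨y, hyp, hxy.symm⟩
    · exact ⟨x, hxp, hxq⟩

theorem stmt6_general {A : Type*} [DecidableEq A] (S : Set (A → A))
    (hcomp : ∀ f ∈ S, ∀ g ∈ S, f ∘ g ∈ S)
    (hFT : ∀ a b : A, a ≠ b → ⇑(Equiv.swap a b) ∈ S)
    (hcard : ∃ x y z : A, x ≠ y ∧ x ≠ z ∧ y ≠ z)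
    (hsc : ∃ h ∈ S, ∃ c, SemiConstWith h c)
    (hnoconst : ∀ h ∈ S, ¬ ∃ c, ∀ x, h x = c)
    (f : A → A) (hf : f ∈ S) (b : A) (hb : f (f b) ≠ f b) :
    ∀ a : A, f a = f b →
      ∃ g ∈ S, (∃ c, SemiConstWith g c) ∧
        (∀ x, g x = g a → x = a) ∧
        (∀ c, SemiConstWith g c → f c ≠ f b) ∧
        ∃ x, f (g (f x)) = f (g (f b)) ∧ f (f x) ≠ f (f b) := by
  intro a ha
  have hab : a ≠ f b := fun h => hb (h ▸ ha)
  by_cases hgood : ∃ x, f (f x) ≠ f (f b) ∧ f x ≠ a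
  · obtain ⟨x, hx, hxa⟩ := hgood
    have hbx : f b ≠ f x := fun h => hx (h ▸ rfl)
    obtain ⟨g, hgS, hg, hgx, hga⟩ :=
      exists_semiConstWith_mem hcomp hFT hsc hnoconst hbx hab.symm hxa
    refine ⟨g, hgS, ⟨_, hg⟩, fun y hy => hg.eq_of_apply_eq hab (hy.trans hga),
      fun c hc => hg.unique hc ▸ hb, x, by rw [hgx, hg.apply_self], hx⟩
  · push Not at hgood
    obtain ⟨z, hzb, hzfb⟩ := exists_ne_ne_of_three hcard (f b) (f (f b))
    obtain ⟨k, hkS, hk, hkf, -⟩ :=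
      exists_semiConstWith_mem hcomp hFT hsc hnoconst hb.symm hzb.symm hzfb.symm
    refine absurd ⟨f b, fun x => ?_⟩ (hnoconst _ (hcomp _ hkS _ (hcomp _ hf _ hf)))
    change k (f (f x)) = f b
    by_cases hx : f (f x) = f (f b)
    · rw [hx, hkf]
    · rw [hgood x hx, ha, hk.apply_self]

theorem stmt6 {A : Type*} [DecidableEq A] (S : Set (A → A))
    (hne : S.Nonempty)
    (hcomp : ∀ f ∈ S, ∀ g ∈ S, f ∘ g ∈ S)
    (hFT : ∀ a b : A, a ≠ b → ⇑(Equiv.swap a b) ∈ S)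
    (hcard : ∃ x y z : A, x ≠ y ∧ x ≠ z ∧ y ≠ z)
    (hsc : ∃ h ∈ S, ∃ c, SemiConstWith h c)
    (hnoconst : ∀ h ∈ S, ¬ ∃ c, ∀ x, h x = c)
    (f : A → A) (hf : f ∈ S) (b : A) (hb : f (f b) ≠ f b) :
    ∀ a : A, f a = f b →
      ∃ g ∈ S, (∃ c, SemiConstWith g c) ∧
        (∀ x, g x = g a → x = a) ∧
        (∀ c, SemiConstWith g c → f c ≠ f b) ∧
        ∃ x, f (g (f x)) = f (g (f b)) ∧ f (f x) ≠ f (f b) :=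
  stmt6_general S hcomp hFT hcard hsc hnoconst f hf b hb
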